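/- Let x ∈ B'_l correspond to u_l = (l, 0, …, 0) ∈ B_l (so x = (l, 0, …, 0) ∈ B'_l) and let y ∈ B'_m be arbitrary. If l ≥ m, then the quantity V_0(x,y) defined as the maximum of the family {θ_{0,j}, θ'_{0,j} : 1 ≤ j ≤ n−2} ∪ {η_{0,j}, η'_{0,j} : 1 ≤ j ≤ n} equals η'_{0,1}(x,y) = l + y_1 − ȳ_1; consequently v_0(u_l ⊗ ζ) = m − y_1 + ȳ_1 for ζ ∈ B_m corresponding to y, whenever x_1 = l ≥ m − y_1 + ȳ_1. -/

import Mathlib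

open Finset

/-- Membership in the set `B'_m`. -/
def memB' (n m : ℕ) (y yb : ℕ → ℤ) : Prop :=
  (∀ i, 1 ≤ i → i ≤ n - 1 → 0 ≤ y i ∧ 0 ≤ yb i) ∧
  (-(min (y (n - 1)) (yb (n - 1))) ≤ y n) ∧
  (∑ i ∈ Finset.Icc 1 (n - 1), (y i + yb i)) + y n = (m : ℤ)

/-- `θ_{0,j}(x,y) = m + Σ_{k=1}^j (x̄_k − ȳ_k)`. -/
def th0 (m : ℤ) (xb yb : ℕ → ℤ) (j : ℕ) : ℤ :=
  m + ∑ k ∈ Finset.Icc 1 j, (xb k - yb k)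

/-- `θ'_{0,j}(x,y) = l + Σ_{k=1}^j (y_k − x_k)`. -/
def th0' (l : ℤ) (x y : ℕ → ℤ) (j : ℕ) : ℤ :=
  l + ∑ k ∈ Finset.Icc 1 j, (y k - x k)

/-- `η_{0,j}` for `1 ≤ j ≤ n−1` and `η_{0,n}`. -/
def eta0 (n : ℕ) (m : ℤ) (x xb y yb : ℕ → ℤ) (j : ℕ) : ℤ :=
  if j = n then m + (∑ k ∈ Finset.Icc 1 (n - 1), (xb k - yb k)) + x n
  else m + (∑ k ∈ Finset.Icc 1 j, (xb k - yb k)) + yb j - x j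

/-- `η'_{0,j}` for `1 ≤ j ≤ n−1` and `η'_{0,n}`. -/
def eta0' (n : ℕ) (l : ℤ) (x xb y yb : ℕ → ℤ) (j : ℕ) : ℤ :=
  if j = n then l + (∑ k ∈ Finset.Icc 1 (n - 1), (y k - x k)) - x n
  else l + (∑ k ∈ Finset.Icc 1 j, (y k - x k)) + x j - yb j

/-- The family of values whose maximum is `V_0(x,y)`. -/
def fam0 (n : ℕ) (l m : ℤ) (x xb y yb : ℕ → ℤ) : Set ℤ :=
  {v | (∃ j, 1 ≤ j ∧ j ≤ n - 2 ∧ v = th0 m xb yb j) ∨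
       (∃ j, 1 ≤ j ∧ j ≤ n - 2 ∧ v = th0' l x y j) ∨
       (∃ j, 1 ≤ j ∧ j ≤ n ∧ v = eta0 n m x xb y yb j) ∨
       (∃ j, 1 ≤ j ∧ j ≤ n ∧ v = eta0' n l x xb y yb j)}

/-- The element `u_l = (l, 0, …, 0)` of `B'_l`: unbarred coordinates. -/
def uv (l : ℕ) : ℕ → ℤ := fun i => if i = 1 then (l : ℤ) else 0

/-- Zero function (barred coordinates of `u_l`). -/
def zf : ℕ → ℤ := fun _ => 0

/-
For `x = u_l` all terms except `η_{0,1} = m − l` and `η'_{0,1} = l + y₁ − ȳ₁` are at most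
`m − ȳ₁`: the `θ`- and `η`-terms lose at least `ȳ₁`, while the `θ'`- and `η'`-terms are bounded
by `Σ_{k<n} y_k`, and `Σ_{k<n} y_k + ȳ₁ ≤ m` because `ȳ_{n−1} + y_n ≥ 0` in `B'_m`.
Either hypothesis on `l` makes `l + y₁ − ȳ₁` dominate both `m − ȳ₁` and `m − l`.
-/

lemma uv_one (l : ℕ) : uv l 1 = l := if_pos rfl

lemma uv_of_ne_one (l : ℕ) {i : ℕ} (hi : i ≠ 1) : uv l i = 0 := if_neg hi

lemma sum_Icc_uv (l : ℕ) {j : ℕ} (hj : 1 ≤ j) : ∑ k ∈ Icc 1 j, uv l k = l := by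
  simp [uv, hj]

namespace memB'

variable {n m : ℕ} {y yb : ℕ → ℤ}

lemma y_nonneg (hy : memB' n m y yb) {i : ℕ} (hi1 : 1 ≤ i) (hin : i ≤ n - 1) : 0 ≤ y i :=
  (hy.1 i hi1 hin).1

lemma yb_nonneg (hy : memB' n m y yb) {i : ℕ} (hi1 : 1 ≤ i) (hin : i ≤ n - 1) : 0 ≤ yb i :=
  (hy.1 i hi1 hin).2

lemma sum_Icc_y_mono (hy : memB' n m y yb) {i j : ℕ} (hij : i ≤ j) (hjn : j ≤ n - 1) :
    ∑ k ∈ Icc 1 i, y k ≤ ∑ k ∈ Icc 1 j, y k :=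
  sum_le_sum_of_subset_of_nonneg (Icc_subset_Icc le_rfl hij) fun _ hk _ =>
    hy.y_nonneg (mem_Icc.1 hk).1 ((mem_Icc.1 hk).2.trans hjn)

lemma yb_one_le_sum_Icc (hy : memB' n m y yb) {j : ℕ} (hj1 : 1 ≤ j) (hjn : j ≤ n - 1) :
    yb 1 ≤ ∑ k ∈ Icc 1 j, yb k :=
  single_le_sum (fun _ hk => hy.yb_nonneg (mem_Icc.1 hk).1 ((mem_Icc.1 hk).2.trans hjn))
    (mem_Icc.2 ⟨le_rfl, hj1⟩)

lemma yb_one_add_le_sum_Icc (hy : memB' n m y yb) {i j : ℕ} (hi1 : 1 < i) (hij : i ≤ j)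
    (hjn : j ≤ n - 1) : yb 1 + yb i ≤ ∑ k ∈ Icc 1 j, yb k := by
  rw [← sum_pair hi1.ne]
  refine sum_le_sum_of_subset_of_nonneg ?_ fun _ hk _ =>
    hy.yb_nonneg (mem_Icc.1 hk).1 ((mem_Icc.1 hk).2.trans hjn)
  intro _ hk
  simp only [mem_insert, mem_singleton] at hk
  simp only [mem_Icc]
  omega

lemma sum_Icc_y_add_yb_one_le (hy : memB' n m y yb) (hn : 3 ≤ n) :
    ∑ k ∈ Icc 1 (n - 1), y k + yb 1 ≤ m := by
  have hyn : -yb (n - 1) ≤ y n := (neg_le_neg (min_le_right _ _)).trans hy.2.1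
  have hyb := hy.yb_one_add_le_sum_Icc (by omega : 1 < n - 1) le_rfl le_rfl
  have hsum := hy.2.2
  rw [sum_add_distrib] at hsum
  linarith

lemma sum_Icc_y_le (hy : memB' n m y yb) (hn : 3 ≤ n) {j : ℕ} (hjn : j ≤ n - 1) :
    ∑ k ∈ Icc 1 j, y k ≤ m - yb 1 := by
  linarith [hy.sum_Icc_y_mono hjn le_rfl, hy.sum_Icc_y_add_yb_one_le hn]

end memB'

lemma eta0'_uv_zf_one {n : ℕ} (hn : 3 ≤ n) (l : ℕ) (y yb : ℕ → ℤ) :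
    eta0' n l (uv l) zf y yb 1 = l + y 1 - yb 1 := by
  simp only [eta0', if_neg (by omega : 1 ≠ n), Icc_self, sum_singleton, uv_one]
  ring

lemma le_or_eq_of_mem_fam0_uv {n l m : ℕ} {y yb : ℕ → ℤ} (hn : 3 ≤ n)
    (hy : memB' n m y yb) {v : ℤ} (hv : v ∈ fam0 n l m (uv l) zf y yb) :
    v ≤ m - yb 1 ∨ v = m - l ∨ v = l + y 1 - yb 1 := by
  rcases hv with ⟨j, hj1, hjn, rfl⟩ | ⟨j, hj1, hjn, rfl⟩ | ⟨j, hj1, hjn, rfl⟩ |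
    ⟨j, hj1, hjn, rfl⟩
  · left
    simp only [th0, zf, zero_sub, sum_neg_distrib]
    linarith [hy.yb_one_le_sum_Icc hj1 (by omega : j ≤ n - 1)]
  · left
    simp only [th0', sum_sub_distrib, sum_Icc_uv l hj1]
    linarith [hy.sum_Icc_y_le hn (by omega : j ≤ n - 1)]
  · rcases (by omega : j = 1 ∨ 1 < j ∧ j < n ∨ j = n) with rfl | ⟨hj1', hjn'⟩ | rfl
    · right; left
      simp only [eta0, if_neg (by omega : 1 ≠ n), Icc_self, sum_singleton, uv_one, zf]
      ring
    · left
      simp only [eta0, if_neg hjn'.ne, zf, zero_sub, sum_neg_distrib, uv_of_ne_one l hj1'.ne']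
      linarith [hy.yb_one_add_le_sum_Icc hj1' le_rfl (by omega : j ≤ n - 1)]
    · left
      simp only [eta0, if_true, zf, zero_sub, sum_neg_distrib, uv_of_ne_one l (by omega : j ≠ 1)]
      linarith [hy.yb_one_le_sum_Icc (by omega : 1 ≤ j - 1) le_rfl]
  · rcases (by omega : j = 1 ∨ 1 < j ∧ j < n ∨ j = n) with rfl | ⟨hj1', hjn'⟩ | rfl
    · exact Or.inr (Or.inr (eta0'_uv_zf_one hn l y yb))
    · left
      simp only [eta0', if_neg hjn'.ne, sum_sub_distrib, sum_Icc_uv l hj1,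
        uv_of_ne_one l hj1'.ne']
      linarith [hy.sum_Icc_y_le hn (by omega : j ≤ n - 1), hy.yb_nonneg hj1 (by omega)]
    · left
      simp only [eta0', if_true, sum_sub_distrib, sum_Icc_uv l (by omega : 1 ≤ j - 1),
        uv_of_ne_one l (by omega : j ≠ 1)]
      linarith [hy.sum_Icc_y_le hn (le_refl (j - 1))]

theorem isGreatest_fam0_uv {n l m : ℕ} {y yb : ℕ → ℤ} (hn : 3 ≤ n) (hy : memB' n m y yb)
    (hm : (m : ℤ) ≤ l + y 1) (hml : (m : ℤ) - l ≤ l + y 1 - yb 1) :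
    IsGreatest (fam0 n l m (uv l) zf y yb) (l + y 1 - yb 1) := by
  refine ⟨Or.inr (Or.inr (Or.inr ⟨1, le_rfl, by omega, (eta0'_uv_zf_one hn l y yb).symm⟩)),
    fun v hv => ?_⟩
  rcases le_or_eq_of_mem_fam0_uv hn hy hv with h | rfl | rfl
  · linarith
  · exact hml
  · exact le_rfl

/-- For `x = u_l` and `y ∈ B'_m` with `l ≥ m`, the maximum `V_0(x,y)` of the
family equals `η'_{0,1}(x,y) = l + y_1 − ȳ_1`; consequently
`v_0(u_l ⊗ ζ) = l + m − V_0 = m − y_1 + ȳ_1` whenever `l ≥ m − y_1 + ȳ_1`. -/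
theorem stmt16 (n l m : ℕ) (hn : 3 ≤ n) (y yb : ℕ → ℤ)
    (hy : memB' n m y yb) :
    ((m : ℤ) ≤ (l : ℤ) →
      IsGreatest (fam0 n (l : ℤ) (m : ℤ) (uv l) zf y yb) ((l : ℤ) + y 1 - yb 1)) ∧
    (∀ V0 : ℤ, IsGreatest (fam0 n (l : ℤ) (m : ℤ) (uv l) zf y yb) V0 →
      (m : ℤ) - y 1 + yb 1 ≤ (l : ℤ) →
      (l : ℤ) + (m : ℤ) - V0 = (m : ℤ) - y 1 + yb 1) := by
  have hy1 := hy.y_nonneg le_rfl (by omega : 1 ≤ n - 1)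
  have hyb1 := hy.yb_nonneg le_rfl (by omega : 1 ≤ n - 1)
  have hyb1m : yb 1 ≤ m := by simpa using hy.sum_Icc_y_le hn (Nat.zero_le _)
  have hl : (0 : ℤ) ≤ l := Int.natCast_nonneg l
  refine ⟨fun hml => isGreatest_fam0_uv hn hy (by linarith) (by linarith), fun V0 hV0 hle => ?_⟩
  have := hV0.unique (isGreatest_fam0_uv hn hy (by linarith) (by linarith))
  linarith
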